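/- Let X ∈ ℝ^{n×p}, λ > 0, and σ ∈ {−1,0,1}^p. There exists y ∈ ℝ^n and a LASSO minimizer β̂ ∈ argmin_b (1/2)‖y−Xb‖₂² + λ‖b‖₁ with sign(β̂) = σ if and only if row(X) intersects the face F₁(σ) = E₁ × ⋯ × E_p of the cube [−1,1]^p, where E_j = {σ_j} if σ_j ≠ 0 and E_j = [−1,1] if σ_j = 0. In particular, accessibility does not depend on λ. -/
import Mathlib


open Finset Matrix

noncomputable def l1norm {p : ℕ} (b : Fin p → ℝ) : ℝ := ∑ i, |b i|

noncomputable def lassoObj {n p : ℕ} (X : Matrix (Fin n) (Fin p) ℝ) (lam : ℝ)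
    (y : Fin n → ℝ) (b : Fin p → ℝ) : ℝ :=
  (1/2) * ∑ i, (y i - X.mulVec b i)^2 + lam * l1norm b

/-- The face `F₁(σ)` of the cube `[-1,1]^p` associated to a sign vector `σ`. -/
def cubeFace {p : ℕ} (σ : Fin p → ℝ) : Set (Fin p → ℝ) :=
  {x | ∀ j, |x j| ≤ 1 ∧ (σ j ≠ 0 → x j = σ j)}


lemma lasso_expand {n p : ℕ} (X : Matrix (Fin n) (Fin p) ℝ) (lam : ℝ)
    (y : Fin n → ℝ) (β b : Fin p → ℝ) :
    lassoObj X lam y b = lassoObj X lam y β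
      + (1/2) * ∑ i, (X.mulVec (b - β) i)^2
      - ∑ i, (y i - X.mulVec β i) * X.mulVec (b - β) i
      + lam * (l1norm b - l1norm β) := by
  have h : ∀ i, X.mulVec (b - β) i = X.mulVec b i - X.mulVec β i := by
    intro i; rw [Matrix.mulVec_sub]; rfl
  have key : ∀ i ∈ univ, (y i - X.mulVec b i)^2
      = ((y i - X.mulVec β i)^2 + ((X.mulVec b i - X.mulVec β i)^2
        - 2 * ((y i - X.mulVec β i) * (X.mulVec b i - X.mulVec β i)))) := fun i _ => by ring
  simp only [lassoObj, h, Finset.sum_congr rfl key, Finset.sum_add_distrib,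
    Finset.sum_sub_distrib, ← Finset.mul_sum]
  ring

lemma dot_swap {n p : ℕ} (X : Matrix (Fin n) (Fin p) ℝ) (z : Fin n → ℝ) (v : Fin p → ℝ) :
    ∑ i, z i * X.mulVec v i = ∑ j, Xᵀ.mulVec z j * v j := by
  simp only [Matrix.mulVec, dotProduct, Finset.mul_sum, Finset.sum_mul,
    Matrix.transpose_apply]
  rw [Finset.sum_comm]
  exact Finset.sum_congr rfl fun j _ => Finset.sum_congr rfl fun i _ => by ring

lemma coord_ineq {n p : ℕ} (X : Matrix (Fin n) (Fin p) ℝ) (lam : ℝ)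
    (y : Fin n → ℝ) (β : Fin p → ℝ)
    (hmin : ∀ b, lassoObj X lam y β ≤ lassoObj X lam y b) (j : Fin p) (t : ℝ) :
    0 ≤ (1/2) * ((∑ i, (X i j)^2) * t^2) - t * (∑ i, X i j * (y i - X.mulVec β i))
      + lam * (|β j + t| - |β j|) := by
  have h := hmin (β + t • (Pi.single j 1 : Fin p → ℝ))
  rw [lasso_expand X lam y β (β + t • (Pi.single j 1 : Fin p → ℝ))] at h
  have hv : (β + t • (Pi.single j 1 : Fin p → ℝ)) - β = t • (Pi.single j 1 : Fin p → ℝ) := by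
    funext k; simp
  rw [hv] at h
  have hm : ∀ i, X.mulVec (t • (Pi.single j 1 : Fin p → ℝ)) i = t * X i j := by
    intro i; rw [Matrix.mulVec_smul, Matrix.mulVec_single]
    simp [Pi.smul_apply]
  have h1 : ∑ i, (X.mulVec (t • (Pi.single j 1 : Fin p → ℝ)) i)^2 = (∑ i, (X i j)^2) * t^2 := by
    rw [Finset.sum_mul]
    exact Finset.sum_congr rfl fun i _ => by rw [hm]; ring
  have h2 : ∑ i, (y i - X.mulVec β i) * X.mulVec (t • (Pi.single j 1 : Fin p → ℝ)) i
      = t * ∑ i, X i j * (y i - X.mulVec β i) := by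
    rw [Finset.mul_sum]
    exact Finset.sum_congr rfl fun i _ => by rw [hm]; ring
  have h3 : l1norm (β + t • (Pi.single j 1 : Fin p → ℝ)) - l1norm β = |β j + t| - |β j| := by
    unfold l1norm
    rw [← Finset.sum_sub_distrib, Finset.sum_eq_single j]
    · simp
    · intro k _ hk; simp [Pi.single_eq_of_ne hk]
    · simp
  rw [h1, h2, h3] at h
  linarith

lemma small_le {a e0 d : ℝ} (ha : 0 ≤ a) (he0 : 0 < e0)
    (h : ∀ ε, 0 < ε → ε ≤ e0 → d ≤ a * ε) : d ≤ 0 := by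
  refine le_of_forall_pos_le_add fun δ hδ => ?_
  have hε : 0 < min e0 (δ / (a+1)) := lt_min he0 (by positivity)
  have h1 := h _ hε (min_le_left _ _)
  have h2 : a * min e0 (δ/(a+1)) ≤ a * (δ/(a+1)) :=
    mul_le_mul_of_nonneg_left (min_le_right _ _) ha
  have h3 : a * (δ/(a+1)) ≤ δ := by
    rw [mul_div_assoc', div_le_iff₀ (by positivity)]; nlinarith
  linarith

lemma zero_case {A c lam : ℝ} (hA : 0 ≤ A) (hlam : 0 < lam)
    (hq : ∀ t : ℝ, 0 ≤ (1/2)*(A*t^2) - t*c + lam*|t|) : |c| ≤ lam := by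
  have h1 : c - lam ≤ 0 := by
    refine small_le (a := A/2) (by linarith) one_pos fun ε hε _ => ?_
    have := hq ε
    rw [abs_of_pos hε] at this
    nlinarith
  have h2 : -c - lam ≤ 0 := by
    refine small_le (a := A/2) (by linarith) one_pos fun ε hε _ => ?_
    have := hq (-ε)
    rw [abs_neg, abs_of_pos hε] at this
    nlinarith
  exact abs_le.2 ⟨by linarith, by linarith⟩

lemma nonzero_case {A c lam s B : ℝ} (hA : 0 ≤ A) (hlam : 0 < lam) (hB : 0 < B)
    (hs : s = 1 ∨ s = -1)
    (hq : ∀ t : ℝ, |t| ≤ B → 0 ≤ (1/2)*(A*t^2) - t*c + lam*(s*t)) : c = lam * s := by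
  have hs2 : s*s = 1 := by rcases hs with h|h <;> rw [h] <;> norm_num
  have habs : ∀ ε : ℝ, 0 < ε → |ε * s| = ε := by
    intro ε hε; rw [abs_mul, abs_of_pos hε]
    rcases hs with h|h <;> simp [h]
  have h1 : s*c - lam ≤ 0 := by
    refine small_le (a := A/2) (by linarith) hB fun ε hε hεB => ?_
    have h := hq (ε*s) (by rw [habs ε hε]; exact hεB)
    have h' : 0 ≤ (1/2)*(A*ε^2) - ε*(s*c) + lam*ε := by
      have e1 : (ε*s)^2 = ε^2 := by
        calc (ε*s)^2 = ε^2*(s*s) := by ring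
        _ = ε^2 := by rw [hs2, mul_one]
      have e2 : s*(ε*s) = ε := by
        calc s*(ε*s) = ε*(s*s) := by ring
        _ = ε := by rw [hs2, mul_one]
      rw [e1, e2] at h; linarith [h]
    nlinarith [h', mul_pos hε hε]
  have h2 : lam - s*c ≤ 0 := by
    refine small_le (a := A/2) (by linarith) hB fun ε hε hεB => ?_
    have h := hq (-(ε*s)) (by rw [abs_neg, habs ε hε]; exact hεB)
    have h' : 0 ≤ (1/2)*(A*ε^2) + ε*(s*c) - lam*ε := by
      have e1 : (-(ε*s))^2 = ε^2 := by
        calc (-(ε*s))^2 = ε^2*(s*s) := by ring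
        _ = ε^2 := by rw [hs2, mul_one]
      have e2 : s*(-(ε*s)) = -ε := by
        calc s*(-(ε*s)) = -(ε*(s*s)) := by ring
        _ = -ε := by rw [hs2, mul_one]
      rw [e1, e2] at h; linarith [h]
    nlinarith [h', mul_pos hε hε]
  have heq : s*c = lam := le_antisymm (by linarith) (by linarith)
  have : c = s * (s*c) := by rw [← mul_assoc, hs2, one_mul]
  rw [this, heq, mul_comm]


theorem lasso_accessible_sign_characterization {n p : ℕ} (X : Matrix (Fin n) (Fin p) ℝ)
    (lam : ℝ) (hlam : 0 < lam) (σ : Fin p → ℝ) (hσ : ∀ j, σ j = -1 ∨ σ j = 0 ∨ σ j = 1) :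
    (∃ (y : Fin n → ℝ) (β : Fin p → ℝ),
        (∀ b, lassoObj X lam y β ≤ lassoObj X lam y b) ∧ (∀ j, Real.sign (β j) = σ j)) ↔
      ∃ z : Fin n → ℝ, Xᵀ.mulVec z ∈ cubeFace σ := by
  constructor
  · rintro ⟨y, β, hmin, hsign⟩
    refine ⟨lam⁻¹ • (y - X.mulVec β), fun j => ?_⟩
    have hw : Xᵀ.mulVec (lam⁻¹ • (y - X.mulVec β)) j
        = lam⁻¹ * (∑ i, X i j * (y i - X.mulVec β i)) := by
      simp only [Matrix.mulVec, dotProduct, Matrix.transpose_apply, Pi.smul_apply,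
        Pi.sub_apply, smul_eq_mul, Finset.mul_sum]
      exact Finset.sum_congr rfl fun i _ => by ring
    set c := ∑ i, X i j * (y i - X.mulVec β i) with hc
    set A := ∑ i, (X i j)^2 with hA
    have hAnn : 0 ≤ A := Finset.sum_nonneg fun i _ => sq_nonneg _
    have hq := coord_ineq X lam y β hmin j
    rcases lt_trichotomy (β j) 0 with hb | hb | hb
    · -- β j < 0, σ j = -1
      have hσj : σ j = -1 := by rw [← hsign j, Real.sign_of_neg hb]
      have hcv : c = lam * σ j := by
        refine nonzero_case hAnn hlam (B := |β j|) (abs_pos.2 (ne_of_lt hb)) (Or.inr hσj) ?_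
        intro t ht
        have habs : |β j + t| - |β j| = σ j * t := by
          rw [hσj, abs_of_neg hb] at *
          rw [abs_of_nonpos (by cases abs_le.1 ht; linarith)]
          ring
        have := hq t
        rw [habs] at this
        linarith
      constructor
      · rw [hw, hcv, ← mul_assoc, inv_mul_cancel₀ (ne_of_gt hlam), one_mul, hσj]
        norm_num
      · intro _
        rw [hw, hcv, ← mul_assoc, inv_mul_cancel₀ (ne_of_gt hlam), one_mul]
    · -- β j = 0, σ j = 0
      have hσj : σ j = 0 := by rw [← hsign j, hb, Real.sign_zero]
      have hcv : |c| ≤ lam := by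
        refine zero_case hAnn hlam fun t => ?_
        have := hq t
        rw [hb, zero_add, abs_zero, sub_zero] at this
        linarith
      constructor
      · rw [hw, abs_mul, abs_of_pos (inv_pos.2 hlam)]
        calc lam⁻¹ * |c| ≤ lam⁻¹ * lam :=
              mul_le_mul_of_nonneg_left hcv (le_of_lt (inv_pos.2 hlam))
        _ = 1 := inv_mul_cancel₀ (ne_of_gt hlam)
      · intro h; exact absurd hσj h
    · -- β j > 0, σ j = 1
      have hσj : σ j = 1 := by rw [← hsign j, Real.sign_of_pos hb]
      have hcv : c = lam * σ j := by
        refine nonzero_case hAnn hlam (B := |β j|) (abs_pos.2 (ne_of_gt hb)) (Or.inl hσj) ?_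
        intro t ht
        have habs : |β j + t| - |β j| = σ j * t := by
          rw [hσj, abs_of_pos hb] at *
          rw [abs_of_nonneg (by cases abs_le.1 ht; linarith)]
          ring
        have := hq t
        rw [habs] at this
        linarith
      constructor
      · rw [hw, hcv, ← mul_assoc, inv_mul_cancel₀ (ne_of_gt hlam), one_mul, hσj]
        norm_num
      · intro _
        rw [hw, hcv, ← mul_assoc, inv_mul_cancel₀ (ne_of_gt hlam), one_mul]
  · rintro ⟨z, hz⟩
    set w := Xᵀ.mulVec z with hwdef
    refine ⟨X.mulVec σ + lam • z, σ, ?_, ?_⟩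
    · intro b
      rw [lasso_expand X lam (X.mulVec σ + lam • z) σ b]
      have hy : ∀ i, (X.mulVec σ + lam • z) i - X.mulVec σ i = lam * z i := by
        intro i; simp
      have hD : ∑ i, ((X.mulVec σ + lam • z) i - X.mulVec σ i) * X.mulVec (b - σ) i
          = lam * (∑ j, w j * b j - ∑ j, w j * σ j) := by
        have : ∀ i ∈ Finset.univ, ((X.mulVec σ + lam • z) i - X.mulVec σ i) * X.mulVec (b - σ) i
            = lam * (z i * X.mulVec (b - σ) i) := fun i _ => by rw [hy i]; ring
        rw [Finset.sum_congr rfl this, ← Finset.mul_sum, dot_swap]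
        congr 1
        rw [← Finset.sum_sub_distrib]
        refine Finset.sum_congr rfl fun j _ => ?_
        have : (b - σ) j = b j - σ j := rfl
        rw [this]; ring
      have hWσ : ∑ j, w j * σ j = l1norm σ := by
        unfold l1norm
        refine Finset.sum_congr rfl fun j _ => ?_
        rcases hσ j with h | h | h
        · rw [(hz j).2 (by rw [h]; norm_num), h]; norm_num
        · rw [h]; norm_num
        · rw [(hz j).2 (by rw [h]; norm_num), h]; norm_num
      have hWb : ∑ j, w j * b j ≤ l1norm b := by
        unfold l1norm
        refine Finset.sum_le_sum fun j _ => ?_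
        calc w j * b j ≤ |w j * b j| := le_abs_self _
        _ = |w j| * |b j| := abs_mul _ _
        _ ≤ 1 * |b j| := mul_le_mul_of_nonneg_right (hz j).1 (abs_nonneg _)
        _ = |b j| := one_mul _
      have hS : 0 ≤ ∑ i, (X.mulVec (b - σ) i)^2 :=
        Finset.sum_nonneg fun i _ => sq_nonneg _
      have hlast : 0 ≤ lam * (l1norm b - ∑ j, w j * b j) :=
        mul_nonneg (le_of_lt hlam) (by linarith)
      rw [hD, hWσ]
      nlinarith [hS, hlast]
    · intro j
      rcases hσ j with h | h | h
      · rw [h]; exact Real.sign_of_neg (by norm_num)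
      · rw [h]; exact Real.sign_zero
      · rw [h]; exact Real.sign_of_pos (by norm_num)
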